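/- arXiv:1605.09141 — 3 statements merged into one kernel-verified Lean document; each statement's English description precedes it below -/
import Mathlib

section
/- Let H be a graph on h vertices, let c be a 2-edge-coloring of K_n with colors red and blue, and suppose S is a set of vertices such that every edge between S and V(K_n)\S whose endpoint in V(K_n)\S lies in a fixed set A is red. If the red star with center x ∈ S consisting of x and h red neighbors contains a NIM-H red edge, and |A| ≥ h with all edges from A to S red, then there is a red copy of H using a NIM-H edge, a contradiction; hence |A| < h. -/
open Function Filter Asymptotics

/-- `Copies H G`: `G` contains a copy of `H` (an injective graph homomorphism). -/
def Copies {α β : Type*} (H : SimpleGraph α) (G : SimpleGraph β) : Prop :=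
  ∃ f : α → β, Injective f ∧ ∀ ⦃u v⦄, H.Adj u v → G.Adj (f u) (f v)

/-- Turán number: max number of edges of an `n`-vertex `H`-free graph. -/
noncomputable def exNum {α : Type*} (n : ℕ) (H : SimpleGraph α) : ℕ :=
  sSup {m | ∃ G : SimpleGraph (Fin n), ¬ Copies H G ∧ m = Nat.card G.edgeSet}

/-- NIM-H edges of a `k`-edge-coloring `c` of `K_n`: nondiagonal pairs lying in no
monochromatic copy of `H`. -/
def NIMedges {α : Type*} {n k : ℕ} (H : SimpleGraph α) (c : Sym2 (Fin n) → Fin k) :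
    Set (Sym2 (Fin n)) :=
  {e | ¬ e.IsDiag ∧ ∀ (i : Fin k) (f : α → Fin n), Injective f →
      (∀ ⦃u v⦄, H.Adj u v → c s(f u, f v) = i) →
      ∀ ⦃u v⦄, H.Adj u v → e ≠ s(f u, f v)}

/-- `fNum n k H`: maximum number of NIM-H edges over all `k`-edge-colorings of `K_n`. -/
noncomputable def fNum {α : Type*} (n k : ℕ) (H : SimpleGraph α) : ℕ :=
  sSup {m | ∃ c : Sym2 (Fin n) → Fin k, m = Nat.card (NIMedges H c)}

/-- Claim 1: if the red star `{x} ∪ L` (with `|L| = h = |V(H)|`) contains a NIM-H red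
edge `xv`, and all edges between `A` and `{x} ∪ L` are red, then `|A| < h`. -/
theorem stmt_1 {α : Type*} [Fintype α] {h n : ℕ} (H : SimpleGraph α)
    (hcard : Fintype.card α = h)
    (X Y : Set α) (hpart : ∀ v, v ∈ X ↔ v ∉ Y)
    (hbip : ∀ ⦃u v⦄, H.Adj u v → (u ∈ X ∧ v ∈ Y) ∨ (u ∈ Y ∧ v ∈ X))
    (hedge : ∃ u v, H.Adj u v)
    (c : Sym2 (Fin n) → Fin 2)
    (x : Fin n) (L : Finset (Fin n)) (hxL : x ∉ L) (hL : L.card = h)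
    (hred : ∀ y ∈ L, c s(x, y) = 0)
    (v : Fin n) (hv : v ∈ L) (hNIM : s(x, v) ∈ NIMedges H c)
    (A : Finset (Fin n)) (hAx : x ∉ A) (hAL : ∀ y ∈ A, y ∉ L)
    (hAred : ∀ y ∈ A, ∀ z ∈ L, c s(y, z) = 0) (hAxred : ∀ y ∈ A, c s(y, x) = 0) :
    A.card < h := by
  by_contra hcon
  push_neg at hcon
  classical
  obtain ⟨u₀', v₀', hadj'⟩ := hedge
  obtain ⟨u₀, v₀, hadj, huX, hvY⟩ :
      ∃ u₀ v₀, H.Adj u₀ v₀ ∧ u₀ ∈ X ∧ v₀ ∈ Y := by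
    rcases hbip hadj' with ⟨hu, hw⟩ | ⟨hu, hw⟩
    · exact ⟨u₀', v₀', hadj', hu, hw⟩
    · exact ⟨v₀', u₀', hadj'.symm, hw, hu⟩
  haveI : Fintype ↥(X \ {u₀} : Set α) := Fintype.ofFinite _
  haveI : Fintype ↥(Y \ {v₀} : Set α) := Fintype.ofFinite _
  haveI : Fintype ↥X := Fintype.ofFinite _
  haveI : Fintype ↥Y := Fintype.ofFinite _
  -- embedding from X \ {u₀} into A
  have hcard1 : Fintype.card ↥(X \ {u₀} : Set α) ≤ Fintype.card ↥(A : Finset (Fin n)) := by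
    calc Fintype.card ↥(X \ {u₀} : Set α) ≤ Fintype.card α :=
          Fintype.card_le_of_injective _ Subtype.coe_injective
      _ = h := hcard
      _ ≤ A.card := hcon
      _ = Fintype.card ↥(A : Finset (Fin n)) := (Fintype.card_coe A).symm
  obtain ⟨g⟩ := Function.Embedding.nonempty_of_card_le hcard1
  -- embedding from Y \ {v₀} into L.erase v
  have hYlt : Fintype.card ↥(Y \ {v₀} : Set α) < Fintype.card ↥Y :=
    Set.card_lt_card (Set.sdiff_singleton_ssubset.mpr hvY)
  have hcard2 : Fintype.card ↥(Y \ {v₀} : Set α) ≤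
      Fintype.card ↥((L.erase v : Finset (Fin n))) := by
    have h1 : Fintype.card ↥Y ≤ h := by
      calc Fintype.card ↥Y ≤ Fintype.card α :=
            Fintype.card_le_of_injective _ Subtype.coe_injective
        _ = h := hcard
    have h2 : (L.erase v).card = h - 1 := by rw [Finset.card_erase_of_mem hv, hL]
    rw [Fintype.card_coe, h2]
    omega
  obtain ⟨g'⟩ := Function.Embedding.nonempty_of_card_le hcard2
  set f : α → Fin n := fun u =>
    if hu : u = u₀ then x
    else if hv' : u = v₀ then v
    else if hX : u ∈ X then (g ⟨u, hX, hu⟩ : Fin n)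
    else (g' ⟨u, not_not.mp fun h' => hX ((hpart u).mpr h'), hv'⟩ : Fin n) with hf
  have hv₀u₀ : v₀ ≠ u₀ := fun e => ((hpart u₀).mp huX) (e ▸ hvY)
  have hfu₀ : f u₀ = x := by simp [hf]
  have hfv₀ : f v₀ = v := by simp [hf, hv₀u₀]
  have hfX : ∀ u, (hu : u ∈ X) → (hne : u ≠ u₀) →
      ∃ (hm : u ∈ (X \ {u₀} : Set α)), f u = (g ⟨u, hm⟩ : Fin n) := by
    intro u hu hne
    have hnv : u ≠ v₀ := fun e => ((hpart u).mp hu) (e ▸ hvY)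
    exact ⟨⟨hu, hne⟩, by simp [hf, hne, hnv, hu]⟩
  have hfY : ∀ u, (huY : u ∈ Y) → (hne : u ≠ v₀) →
      ∃ (hm : u ∈ (Y \ {v₀} : Set α)), f u = (g' ⟨u, hm⟩ : Fin n) := by
    intro u huY hne
    have hnX : u ∉ X := fun hx => ((hpart u).mp hx) huY
    have hnu : u ≠ u₀ := fun e => hnX (e ▸ huX)
    refine ⟨⟨huY, hne⟩, ?_⟩
    simp [hf, hnu, hne, hnX]
  have hfXA : ∀ u, u ∈ X → f u ∈ insert x A := by
    intro u hu
    by_cases hne : u = u₀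
    · rw [hne, hfu₀]; exact Finset.mem_insert_self _ _
    · obtain ⟨hm, he⟩ := hfX u hu hne
      rw [he]; exact Finset.mem_insert_of_mem (Finset.coe_mem _)
  have hfYL : ∀ u, u ∈ Y → f u ∈ L := by
    intro u hu
    by_cases hne : u = v₀
    · rw [hne, hfv₀]; exact hv
    · obtain ⟨hm, he⟩ := hfY u hu hne
      rw [he]
      exact Finset.mem_of_mem_erase (Finset.coe_mem _)
  have hdisj : ∀ a, a ∈ insert x A → a ∉ L := by
    intro a ha
    rcases Finset.mem_insert.mp ha with rfl | ha'
    · exact hxL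
    · exact hAL _ ha'
  have finj : Injective f := by
    intro a b hab
    by_cases haX : a ∈ X <;> by_cases hbX : b ∈ X
    · by_cases hau : a = u₀ <;> by_cases hbu : b = u₀
      · exact hau.trans hbu.symm
      · exfalso
        obtain ⟨hm, he⟩ := hfX b hbX hbu
        rw [hau, hfu₀, he] at hab
        have : x ∈ A := by rw [hab]; exact Finset.coe_mem _
        exact hAx this
      · exfalso
        obtain ⟨hm, he⟩ := hfX a haX hau
        rw [hbu, hfu₀, he] at hab
        have : x ∈ A := by rw [← hab]; exact Finset.coe_mem _
        exact hAx this
      · obtain ⟨hma, hea⟩ := hfX a haX hau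
        obtain ⟨hmb, heb⟩ := hfX b hbX hbu
        rw [hea, heb] at hab
        have := g.injective (Subtype.coe_injective hab)
        exact congrArg Subtype.val this
    · exfalso
      have hbY : b ∈ Y := not_not.mp fun h' => hbX ((hpart b).mpr h')
      exact hdisj _ (hfXA a haX) (hab ▸ hfYL b hbY)
    · exfalso
      have haY : a ∈ Y := not_not.mp fun h' => haX ((hpart a).mpr h')
      exact hdisj _ (hfXA b hbX) (hab ▸ hfYL a haY)
    · have haY : a ∈ Y := not_not.mp fun h' => haX ((hpart a).mpr h')
      have hbY : b ∈ Y := not_not.mp fun h' => hbX ((hpart b).mpr h')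
      by_cases hav : a = v₀ <;> by_cases hbv : b = v₀
      · exact hav.trans hbv.symm
      · exfalso
        obtain ⟨hm, he⟩ := hfY b hbY hbv
        rw [hav, hfv₀, he] at hab
        have h2 := Finset.coe_mem (g' ⟨b, hm⟩)
        rw [← hab] at h2
        exact Finset.notMem_erase v L h2
      · exfalso
        obtain ⟨hm, he⟩ := hfY a haY hav
        rw [hbv, hfv₀, he] at hab
        have h2 := Finset.coe_mem (g' ⟨a, hm⟩)
        rw [hab] at h2
        exact Finset.notMem_erase v L h2
      · obtain ⟨hma, hea⟩ := hfY a haY hav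
        obtain ⟨hmb, heb⟩ := hfY b hbY hbv
        rw [hea, heb] at hab
        have := g'.injective (Subtype.coe_injective hab)
        exact congrArg Subtype.val this
  have key : ∀ u w, u ∈ X → w ∈ Y → c s(f u, f w) = 0 := by
    intro u w hu hw
    have h1 := hfXA u hu
    have h2 := hfYL w hw
    rcases Finset.mem_insert.mp h1 with he | hA'
    · rw [he]; exact hred _ h2
    · exact hAred _ hA' _ h2
  have hcol : ∀ ⦃u w⦄, H.Adj u w → c s(f u, f w) = 0 := by
    intro u w hA
    rcases hbip hA with ⟨hu, hw⟩ | ⟨hu, hw⟩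
    · exact key u w hu hw
    · rw [Sym2.eq_swap]; exact key w u hw hu
  exact hNIM.2 0 f finj hcol hadj (by rw [hfu₀, hfv₀])
end

section
/- For integers 2 ≤ s ≤ t with t > s² − 3s + 3, the complete bipartite graph K_{s,t} is reducible: deleting a vertex w from the side of size s gives the connected graph K_{s−1,t}, and ex(n, K_{s−1,t}) = o(ex(n, K_{s,t})). -/
open Function Filter Asymptotics

/-!
Removing a left vertex from `K_{s,t}` leaves a copy of `K_{s-1,t}`, which is connected.

Upper bound (Kővári–Sós–Turán): in a `K_{k,t}`-free graph every `k`-set of vertices has fewer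
than `t` common neighbours, so double counting gives `∑ᵥ C(d(v), k) ≤ t · C(n, k)`, and the
power-mean inequality turns this into `e(G) = O(n^(2 - 1/k))`.

Lower bound (first moment with deletion): colour every pair of vertices with one of `q` colours
and keep the pairs of colour `0`. On average over all colourings such a graph has `C(n, 2)/q`
edges and at most `n^v/q^e` labelled copies of a graph `H` with `v` vertices and `e` edges;
deleting one edge from each copy leaves an `H`-free graph, so
`ex(n, H) ≥ C(n, 2)/q - n^v/q^e`. Taking `q ≈ 8 n^((v-2)/(e-1))` gives
`ex(n, H) = Ω(n^(2 - (v-2)/(e-1)))`.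

For `H = K_{s,t}` the exponents compare as `(s+t-2)/(st-1) < 1/(s-1)`, which is equivalent to
`t > s² - 3s + 3`.
-/

open SimpleGraph Finset Fintype

section Counting

variable {ι β : Type*} [Fintype ι] [DecidableEq ι] [Fintype β] [DecidableEq β]

theorem card_filter_forall_eq_mul (b : β) (S : Finset ι) :
    #{ω : ι → β | ∀ x ∈ S, ω x = b} * card β ^ #S = card β ^ card ι := by
  have hpi : ({ω : ι → β | ∀ x ∈ S, ω x = b} : Finset _) =
      Fintype.piFinset fun x => if x ∈ S then {b} else univ := by
    ext ω
    simp only [mem_filter, mem_univ, true_and, Fintype.mem_piFinset]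
    refine ⟨fun h x => ?_, fun h x hx => by simpa [hx] using h x⟩
    split_ifs with hx
    · simp [h x hx]
    · simp
  have hcard : ∀ x, #(if x ∈ S then {b} else univ) = if x ∈ S then 1 else card β :=
    fun x => by split_ifs <;> simp
  rw [hpi, Fintype.card_piFinset]
  simp only [hcard, prod_ite, prod_const_one, prod_const, one_mul, ← pow_add]
  rw [← card_compl_add_card S, filter_not, ← compl_eq_univ_sdiff, filter_mem_eq_inter,
    univ_inter]

theorem sum_card_filter_forall_eq_mul {X : Type*} (b : β) (A : Finset X) (S : X → Finset ι)
    {k : ℕ} (hS : ∀ x ∈ A, #(S x) = k) :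
    (∑ ω : ι → β, #{x ∈ A | ∀ y ∈ S x, ω y = b}) * card β ^ k =
      #A * card β ^ card ι := by
  let r : (ι → β) → X → Prop := fun ω x => ∀ y ∈ S x, ω y = b
  calc (∑ ω : ι → β, #{x ∈ A | ∀ y ∈ S x, ω y = b}) * card β ^ k
      = (∑ x ∈ A, #(univ.bipartiteBelow r x)) * card β ^ k :=
        congrArg (· * card β ^ k) (sum_card_bipartiteAbove_eq_sum_card_bipartiteBelow r)
    _ = ∑ _x ∈ A, card β ^ card ι := by
        rw [sum_mul]
        refine sum_congr rfl fun x hx => ?_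
        rw [← hS x hx]
        exact card_filter_forall_eq_mul b (S x)
    _ = #A * card β ^ card ι := by rw [sum_const, smul_eq_mul]

end Counting

theorem copies_iff_isContained {α β : Type*} {H : SimpleGraph α} {G : SimpleGraph β} :
    Copies H G ↔ H ⊑ G :=
  ⟨fun ⟨f, hf, hadj⟩ => ⟨⟨⟨f, fun h => hadj h⟩, hf⟩⟩,
    fun ⟨c⟩ => ⟨c, c.injective, fun _ _ h => c.toHom.map_adj h⟩⟩

theorem exNum_eq_extremalNumber {α : Type*} (n : ℕ) (H : SimpleGraph α) :
    exNum n H = extremalNumber n H := by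
  classical
  have hle : ∀ m ∈ {m | ∃ G : SimpleGraph (Fin n), ¬ Copies H G ∧ m = Nat.card G.edgeSet},
      m ≤ extremalNumber n H := by
    rintro _ ⟨G, hG, rfl⟩
    rw [Nat.card_eq_fintype_card, ← edgeFinset_card]
    simpa using card_edgeFinset_le_extremalNumber (copies_iff_isContained.not.mp hG)
  refine le_antisymm (csSup_le' hle) ?_
  have := (extremalNumber_le_iff (V := Fin n) H (exNum n H)).mpr fun G _ hG =>
    le_csSup ⟨_, hle⟩ ⟨G, copies_iff_isContained.not.mpr hG, by
      rw [Nat.card_eq_fintype_card, ← edgeFinset_card]⟩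
  simpa using this

namespace SimpleGraph

section CompleteBipartite

variable {α β : Type*}

def induceComplInlIso (a : α) :
    (completeBipartiteGraph α β).induce {Sum.inl a}ᶜ ≃g
      completeBipartiteGraph {x // x ≠ a} β where
  toFun
    | ⟨.inl x, hx⟩ => .inl ⟨x, fun h => hx (by simp [h])⟩
    | ⟨.inr y, _⟩ => .inr y
  invFun
    | .inl x => ⟨.inl x, by simpa using x.2⟩
    | .inr y => ⟨.inr y, by simp⟩
  left_inv := by rintro ⟨x | y, _⟩ <;> rfl
  right_inv := by rintro (x | y) <;> rfl
  map_rel_iff' := by rintro ⟨x | y, _⟩ ⟨x' | y', _⟩ <;> simp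

theorem completeBipartiteGraph_connected [Nonempty α] [Nonempty β] :
    (completeBipartiteGraph α β).Connected := by
  obtain ⟨a⟩ := ‹Nonempty α›
  obtain ⟨b⟩ := ‹Nonempty β›
  have hreach : ∀ v, (completeBipartiteGraph α β).Reachable (.inl a) v := by
    rintro (x | y)
    · have hab : (completeBipartiteGraph α β).Adj (.inl a) (.inr b) := by simp
      exact hab.reachable.trans (Adj.reachable (by simp))
    · exact Adj.reachable (by simp)
  exact ⟨fun u v => (hreach u).symm.trans (hreach v)⟩

theorem card_edgeFinset_completeBipartiteGraph [Fintype α] [Fintype β]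
    [Fintype (completeBipartiteGraph α β).edgeSet] :
    #(completeBipartiteGraph α β).edgeFinset = card α * card β := by
  have h := encard_edgeSet_completeBipartiteGraph (W₁ := α) (W₂ := β)
  rw [← coe_edgeFinset, Set.encard_coe_eq_coe_finsetCard] at h
  simp only [ENat.card_eq_coe_fintype_card] at h
  exact_mod_cast h

end CompleteBipartite

section KovariSosTuran

variable {V α β : Type*} [Fintype V] [DecidableEq V] [Fintype α] [Fintype β]
  {G : SimpleGraph V} [DecidableRel G.Adj]

theorem card_filter_subset_neighborFinset_lt (h : (completeBipartiteGraph α β).Free G)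
    {S : Finset V} (hS : #S = card α) : #{v | S ⊆ G.neighborFinset v} < card β := by
  by_contra! hβ
  obtain ⟨T, hT, hTcard⟩ := Finset.exists_subset_card_eq hβ
  refine h (completeBipartiteGraph_isContained_iff.mpr ⟨S, T, hS, hTcard, ?_⟩)
  intro u hu v hv
  have hv : S ⊆ G.neighborFinset v := (Finset.mem_filter.mp (hT hv)).2
  simpa [adj_comm] using hv hu

theorem sum_choose_degree_le (h : (completeBipartiteGraph α β).Free G) :
    ∑ v, (G.degree v).choose (card α) ≤ (card V).choose (card α) * card β := by
  let r : V → Finset V → Prop := fun v S => S ⊆ G.neighborFinset v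
  have habove : ∀ v, (powersetCard (card α) univ).bipartiteAbove r v =
      powersetCard (card α) (G.neighborFinset v) := fun v => by
    ext S; simp [r, Finset.bipartiteAbove, and_comm]
  calc ∑ v, (G.degree v).choose (card α)
      = ∑ v, #((powersetCard (card α) univ).bipartiteAbove r v) := by
        simp [habove]
    _ = ∑ S ∈ powersetCard (card α) univ, #(univ.bipartiteBelow r S) :=
        sum_card_bipartiteAbove_eq_sum_card_bipartiteBelow r
    _ ≤ ∑ _S ∈ powersetCard (card α) (univ : Finset V), card β := by
        refine sum_le_sum fun S hS => (card_filter_subset_neighborFinset_lt h ?_).le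
        exact (mem_powersetCard.mp hS).2
    _ = (card V).choose (card α) * card β := by simp

theorem sum_pow_degree_add_one_sub_le (h : (completeBipartiteGraph α β).Free G) :
    ∑ v, (G.degree v + 1 - card α) ^ card α ≤ card β * card V ^ card α := by
  calc ∑ v, (G.degree v + 1 - card α) ^ card α
      ≤ ∑ v, (card α).factorial * (G.degree v).choose (card α) := by
        refine sum_le_sum fun v _ => ?_
        rw [← Nat.descFactorial_eq_factorial_mul_choose]
        exact Nat.pow_sub_le_descFactorial _ _
    _ ≤ (card α).factorial * ((card V).choose (card α) * card β) := by
        rw [← mul_sum]; exact Nat.mul_le_mul_left _ (sum_choose_degree_le h)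
    _ = (card V).descFactorial (card α) * card β := by
        rw [Nat.descFactorial_eq_factorial_mul_choose, mul_assoc]
    _ ≤ card β * card V ^ card α := by
        rw [mul_comm]; exact Nat.mul_le_mul_left _ (Nat.descFactorial_le_pow _ _)

theorem card_edgeFinset_le_rpow_of_free [Nonempty α] (h : (completeBipartiteGraph α β).Free G) :
    (#G.edgeFinset : ℝ) ≤ (card α + card β) * card V ^ (2 - 1 / (card α : ℝ)) := by
  obtain ⟨k, hk⟩ : ∃ k, card α = k + 1 := Nat.exists_eq_add_one.mpr card_pos
  have hKST := sum_pow_degree_add_one_sub_le h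
  rw [hk] at hKST
  rw [hk]
  set t := card β
  set n := card V
  set T : ℝ := (n : ℝ) ^ (2 - 1 / (k + 1 : ℝ))
  set d : V → ℕ := fun v => G.degree v + 1 - (k + 1)
  have hdeg : 2 * (#G.edgeFinset : ℝ) ≤ ∑ v, (d v : ℝ) + (k + 1) * n := by
    have : ∑ v, G.degree v ≤ ∑ v, (d v + (k + 1)) :=
      sum_le_sum fun v _ => by simp only [d]; omega
    rw [sum_degrees_eq_twice_card_edges, sum_add_distrib, sum_const, card_univ] at this
    exact_mod_cast (by simpa [mul_comm] using this)
  have hTpow : T ^ (k + 1) = (n : ℝ) ^ (2 * k + 1) := by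
    rw [← Real.rpow_mul_natCast (Nat.cast_nonneg _), ← Real.rpow_natCast]
    congr 1
    push_cast
    field_simp
    ring
  have hsum : ∑ v, (d v : ℝ) ≤ t * T := by
    refine le_of_pow_le_pow_left₀ k.succ_ne_zero (by positivity) ?_
    calc (∑ v, (d v : ℝ)) ^ (k + 1) ≤ (n : ℝ) ^ k * ∑ v, (d v : ℝ) ^ (k + 1) :=
          pow_sum_le_card_mul_sum_pow (fun _ _ => Nat.cast_nonneg _) k
      _ ≤ (n : ℝ) ^ k * (t * (n : ℝ) ^ (k + 1)) := by
          gcongr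
          exact_mod_cast hKST
      _ = t * T ^ (k + 1) := by rw [hTpow]; ring
      _ ≤ (t * T) ^ (k + 1) := by
          rw [mul_pow]
          gcongr
          exact_mod_cast Nat.le_self_pow k.succ_ne_zero t
  have hnT : (n : ℝ) ≤ T := by
    rcases Nat.eq_zero_or_pos n with hn | hn
    · rw [hn, Nat.cast_zero]; positivity
    · refine Real.self_le_rpow_of_one_le (by exact_mod_cast hn) ?_
      have : 1 / (k + 1 : ℝ) ≤ 1 := div_le_one_of_le₀ (by linarith) (by positivity)
      linarith
  have hT : 0 ≤ T := by positivity
  push_cast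
  nlinarith

theorem extremalNumber_completeBipartiteGraph_le [Nonempty α] (n : ℕ) :
    (extremalNumber n (completeBipartiteGraph α β) : ℝ) ≤
      (card α + card β) * n ^ (2 - 1 / (card α : ℝ)) := by
  conv_lhs => rw [← Fintype.card_fin n]
  rw [extremalNumber_le_iff_of_nonneg _ (by positivity)]
  intro G _ h
  simpa using card_edgeFinset_le_rpow_of_free h

end KovariSosTuran

section FirstMoment

variable {V W : Type*} [Fintype V] [Fintype W]

theorem card_edgeFinset_le_extremalNumber_add_labelledCopyCount {H : SimpleGraph W}
    (hH : H ≠ ⊥) (G : SimpleGraph V) [Fintype G.edgeSet] :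
    #G.edgeFinset ≤ extremalNumber (card V) H + G.labelledCopyCount H := by
  classical
  calc #G.edgeFinset ≤ #(G.killCopies H).edgeFinset + G.copyCount H :=
        le_card_edgeFinset_killCopies_add_copyCount
    _ ≤ extremalNumber (card V) H + G.labelledCopyCount H := by
        refine add_le_add ((card_edgeFinset_le_extremalNumber (G := G.killCopies H)
          (free_killCopies hH)).trans_eq' (by congr!)) copyCount_le_labelledCopyCount

variable [DecidableEq V] [DecidableEq W]

theorem labelledCopyCount_le_card_filter (G : SimpleGraph V) [Fintype G.edgeSet]
    (H : SimpleGraph W) [Fintype H.edgeSet] :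
    G.labelledCopyCount H ≤
      #{f : W ↪ V | ∀ e ∈ H.edgeFinset, e.map f ∈ G.edgeFinset} := by
  classical
  have hmem : ∀ c : Copy H G, c.toEmbedding ∈
      ({f : W ↪ V | ∀ e ∈ H.edgeFinset, e.map f ∈ G.edgeFinset} : Finset _) := by
    intro c
    simp only [mem_filter, mem_univ, true_and, mem_edgeFinset]
    exact fun e he => c.toHom.map_mem_edgeSet he
  unfold labelledCopyCount
  rw [← Fintype.card_coe]
  convert Fintype.card_le_of_injective (fun c => ⟨_, hmem c⟩) fun c c' h =>
    DFunLike.ext c c' fun a => DFunLike.congr_fun (congrArg Subtype.val h) a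

section RandomGraph

variable {β : Type*} [Fintype β] [DecidableEq β] (b : β)

theorem sum_card_edgeFinset_fromEdgeSet_mul :
    (∑ ω : Sym2 V → β, #(fromEdgeSet {e | ω e = b}).edgeFinset) * card β =
      (card V).choose 2 * card β ^ card (Sym2 V) := by
  have hedges : ∀ ω : Sym2 V → β, #(fromEdgeSet {e | ω e = b}).edgeFinset =
      #{e ∈ {e : Sym2 V | ¬e.IsDiag} | ∀ y ∈ ({e} : Finset _), ω y = b} := fun ω => by
    congr 1; ext e; simp [and_comm]
  have h := sum_card_filter_forall_eq_mul b {e : Sym2 V | ¬e.IsDiag} (fun e => {e})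
    (k := 1) (by simp)
  rw [pow_one] at h
  simp only [hedges, h, ← Sym2.card_subtype_not_diag, Fintype.card_subtype]

theorem sum_labelledCopyCount_fromEdgeSet_mul_le (H : SimpleGraph W) [Fintype H.edgeSet] :
    (∑ ω : Sym2 V → β, (fromEdgeSet {e | ω e = b}).labelledCopyCount H) *
      card β ^ #H.edgeFinset ≤ card V ^ card W * card β ^ card (Sym2 V) := by
  let S : (W ↪ V) → Finset (Sym2 V) := fun f => H.edgeFinset.image (Sym2.map f)
  have hS : ∀ f ∈ (univ : Finset (W ↪ V)), #(S f) = #H.edgeFinset := fun f _ =>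
    card_image_of_injective _ (Sym2.map.injective f.injective)
  calc (∑ ω : Sym2 V → β, (fromEdgeSet {e | ω e = b}).labelledCopyCount H) *
        card β ^ #H.edgeFinset
      ≤ (∑ ω : Sym2 V → β, #{f ∈ univ | ∀ y ∈ S f, ω y = b}) *
          card β ^ #H.edgeFinset := by
        gcongr with ω
        refine (labelledCopyCount_le_card_filter _ H).trans_eq (congrArg card (filter_congr ?_))
        intro f _
        simp only [S, forall_mem_image, mem_edgeFinset, edgeSet_fromEdgeSet]
        refine forall₂_congr fun e he => ?_
        simp [Sym2.isDiag_map f.injective, H.not_isDiag_of_mem_edgeSet he]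
    _ = card (W ↪ V) * card β ^ card (Sym2 V) := sum_card_filter_forall_eq_mul b univ S hS
    _ ≤ card V ^ card W * card β ^ card (Sym2 V) := by
        gcongr
        rw [Fintype.card_embedding_eq]
        exact Nat.descFactorial_le_pow _ _

end RandomGraph

theorem choose_two_div_sub_le_extremalNumber {H : SimpleGraph W} [Fintype H.edgeSet]
    (hH : H ≠ ⊥) (n : ℕ) {q : ℕ} (hq : 0 < q) :
    (n.choose 2 : ℝ) / q - (n : ℝ) ^ card W / q ^ #H.edgeFinset ≤ extremalNumber n H := by
  have : NeZero q := ⟨hq.ne'⟩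
  set Q := q ^ card (Sym2 (Fin n))
  set E := ∑ ω : Sym2 (Fin n) → Fin q, #(fromEdgeSet {e | ω e = 0}).edgeFinset
  set L := ∑ ω : Sym2 (Fin n) → Fin q, (fromEdgeSet {e | ω e = 0}).labelledCopyCount H
  have hE : E * q = n.choose 2 * Q := by
    simpa using sum_card_edgeFinset_fromEdgeSet_mul (V := Fin n) (0 : Fin q)
  have hL : L * q ^ #H.edgeFinset ≤ n ^ card W * Q := by
    simpa using sum_labelledCopyCount_fromEdgeSet_mul_le (V := Fin n) (0 : Fin q) H
  have hEL : E ≤ Q * extremalNumber n H + L := by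
    calc E ≤ ∑ ω : Sym2 (Fin n) → Fin q,
          (extremalNumber n H + (fromEdgeSet {e | ω e = 0}).labelledCopyCount H) :=
          sum_le_sum fun ω _ => by
            simpa using card_edgeFinset_le_extremalNumber_add_labelledCopyCount hH
              (fromEdgeSet {e | ω e = 0})
      _ = Q * extremalNumber n H + L := by
          rw [sum_add_distrib, sum_const, card_univ, Fintype.card_fun, Fintype.card_fin,
            smul_eq_mul]
  have hQ : (0 : ℝ) < Q := by positivity
  calc (n.choose 2 : ℝ) / q - (n : ℝ) ^ card W / q ^ #H.edgeFinset
      ≤ E / Q - L / Q := by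
        gcongr ?_ - ?_
        · rw [div_le_div_iff₀ (by positivity) hQ]
          exact_mod_cast hE.symm.le
        · rw [div_le_div_iff₀ hQ (by positivity)]
          exact_mod_cast hL
    _ ≤ extremalNumber n H := by
        rw [← sub_div, div_le_iff₀ hQ, sub_le_iff_le_add, mul_comm]
        exact_mod_cast hEL

theorem rpow_le_mul_extremalNumber {H : SimpleGraph W} [Fintype H.edgeSet]
    (he : 2 ≤ #H.edgeFinset) {n : ℕ} (hn : 2 ≤ n) :
    (n : ℝ) ^ (2 - ((card W : ℝ) - 2) / ((#H.edgeFinset : ℝ) - 1)) ≤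
      100 * extremalNumber n H := by
  have hv : 2 ≤ card W := by
    by_contra! hv
    have := H.card_edgeFinset_le_card_choose_two
    rw [Nat.choose_eq_zero_of_lt hv] at this
    omega
  have hH : H ≠ ⊥ := edgeFinset_nonempty.mp (card_pos.mp (by omega))
  obtain ⟨m, hm⟩ : ∃ m, #H.edgeFinset = m + 2 := Nat.exists_eq_add_of_le' he
  have hn0 : (0 : ℝ) < n := by positivity
  set θ : ℝ := ((card W : ℝ) - 2) / ((#H.edgeFinset : ℝ) - 1)
  set B : ℝ := (n : ℝ) ^ θ
  have hB : 1 ≤ B := Real.one_le_rpow (by exact_mod_cast (by omega : 1 ≤ n))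
    (div_nonneg (by rw [sub_nonneg]; exact_mod_cast hv) (by rw [hm]; push_cast; linarith))
  -- `B` is chosen so that `B ^ (e - 1) = n ^ (v - 2)`.
  have hBpow : (n : ℝ) ^ card W = n ^ 2 * B ^ (m + 1) := by
    rw [← Real.rpow_mul_natCast hn0.le, ← Real.rpow_natCast, ← Real.rpow_natCast _ 2,
      ← Real.rpow_add hn0]
    congr 1
    simp only [θ, hm]
    push_cast
    rw [show (m : ℝ) + 2 - 1 = m + 1 by ring]
    field_simp
    ring
  set q := ⌈8 * B⌉₊
  have hq8 : 8 * B ≤ q := Nat.le_ceil _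
  have hq9 : (q : ℝ) ≤ 9 * B := (Nat.ceil_lt_add_one (by positivity)).le.trans (by linarith)
  have hq : 0 < q := by exact_mod_cast (by positivity : (0 : ℝ) < 8 * B).trans_le hq8
  have hedges : (n : ℝ) ^ 2 / B / 36 ≤ n.choose 2 / q := by
    rw [Nat.cast_choose_two, div_div, div_le_div_iff₀ (by positivity) (by positivity)]
    have hn2 : (2 : ℝ) ≤ n := by exact_mod_cast hn
    have hB0 : 0 ≤ B := by positivity
    nlinarith [mul_le_mul_of_nonneg_left hq9 (by positivity : (0 : ℝ) ≤ n ^ 2),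
      mul_nonneg hB0 (mul_nonneg hn0.le (sub_nonneg.mpr hn2))]
  have hcopies : (n : ℝ) ^ card W / q ^ #H.edgeFinset ≤ n ^ 2 / B / 64 := by
    calc (n : ℝ) ^ card W / q ^ #H.edgeFinset ≤ n ^ 2 * B ^ (m + 1) / (8 * B) ^ (m + 2) := by
          rw [hBpow, hm]
          gcongr
      _ = n ^ 2 / B / (64 * 8 ^ m) := by field_simp; ring
      _ ≤ n ^ 2 / B / 64 := by
          gcongr
          exact le_mul_of_one_le_right (by norm_num) (one_le_pow₀ (by norm_num))
  have hrpow : (n : ℝ) ^ (2 - θ) = n ^ 2 / B := by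
    rw [Real.rpow_sub hn0, Real.rpow_two]
  rw [← div_le_iff₀' (by norm_num)]
  calc (n : ℝ) ^ (2 - θ) / 100 ≤ n ^ 2 / B / 36 - n ^ 2 / B / 64 := by
        have : 0 ≤ (n : ℝ) ^ 2 / B := by positivity
        rw [hrpow]
        linarith
    _ ≤ n.choose 2 / q - (n : ℝ) ^ card W / q ^ #H.edgeFinset := sub_le_sub hedges hcopies
    _ ≤ extremalNumber n H := choose_two_div_sub_le_extremalNumber hH n hq

theorem rpow_le_mul_extremalNumber_completeBipartiteGraph {α β : Type*} [Fintype α]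
    [Fintype β] (h : 2 ≤ card α * card β) {n : ℕ} (hn : 2 ≤ n) :
    (n : ℝ) ^ (2 - (card α + card β - 2) / (card α * card β - 1 : ℝ)) ≤
      100 * extremalNumber n (completeBipartiteGraph α β) := by
  classical
  have he : 2 ≤ #(completeBipartiteGraph α β).edgeFinset := by
    rwa [card_edgeFinset_completeBipartiteGraph]
  simpa [card_edgeFinset_completeBipartiteGraph] using rpow_le_mul_extremalNumber he hn

end FirstMoment

end SimpleGraph

theorem isLittleO_natCast_rpow_rpow {a b : ℝ} (hab : a < b) :
    (fun n : ℕ => (n : ℝ) ^ a) =o[atTop] fun n => (n : ℝ) ^ b := by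
  have hreal : (fun x : ℝ => x ^ a) =o[atTop] fun x => x ^ b := by
    refine (isLittleO_iff_tendsto' ?_).mpr ?_
    · filter_upwards [eventually_gt_atTop 0] with x hx h
      exact absurd h (Real.rpow_pos_of_pos hx b).ne'
    · refine (tendsto_rpow_neg_atTop (sub_pos.mpr hab)).congr' ?_
      filter_upwards [eventually_gt_atTop 0] with x hx
      rw [← Real.rpow_sub hx, neg_sub]
  exact hreal.comp_tendsto tendsto_natCast_atTop_atTop

theorem isLittleO_of_norm_le_rpow_of_rpow_le {f g : ℕ → ℝ} {a b C D : ℝ} (hab : a < b)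
    (hD : 0 ≤ D) (hf : ∀ᶠ n : ℕ in atTop, ‖f n‖ ≤ C * (n : ℝ) ^ a)
    (hg : ∀ᶠ n : ℕ in atTop, (n : ℝ) ^ b ≤ D * g n) : f =o[atTop] g := by
  have hfO : f =O[atTop] fun n : ℕ => (n : ℝ) ^ a :=
    IsBigO.of_bound C <| hf.mono fun n hn => by
      rwa [Real.norm_of_nonneg (Real.rpow_nonneg n.cast_nonneg a)]
  have hgO : (fun n : ℕ => (n : ℝ) ^ b) =O[atTop] g :=
    IsBigO.of_bound D <| hg.mono fun n hn => by
      rw [Real.norm_of_nonneg (Real.rpow_nonneg n.cast_nonneg b)]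
      exact hn.trans (mul_le_mul_of_nonneg_left (Real.le_norm_self _) hD)
  exact hfO.trans_isLittleO ((isLittleO_natCast_rpow_rpow hab).trans_isBigO hgO)

theorem add_sub_two_div_mul_sub_one_lt {s t : ℝ} (hs : 2 ≤ s) (hst : s ^ 2 - 3 * s + 3 < t) :
    (s + t - 2) / (s * t - 1) < 1 / (s - 1) := by
  have ht : 1 < t := by nlinarith
  rw [div_lt_div_iff₀ (by nlinarith) (by linarith)]
  nlinarith

/-- For `2 ≤ s ≤ t` with `t > s² − 3s + 3`, the complete bipartite graph `K_{s,t}` is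
reducible: deleting a vertex `w` on the side of size `s` leaves the connected graph
`K_{s−1,t}`, and `ex(n, K_{s−1,t}) = o(ex(n, K_{s,t}))`. -/
theorem stmt_7 (s t : ℕ) (hs : 2 ≤ s)
    (ht : (s : ℤ) ^ 2 - 3 * s + 3 < (t : ℤ))
    (w : Fin s ⊕ Fin t) (hw : w = Sum.inl ⟨0, by omega⟩) :
    ((completeBipartiteGraph (Fin s) (Fin t)).induce ({w}ᶜ : Set (Fin s ⊕ Fin t))).Connected ∧
    (fun n => (exNum n ((completeBipartiteGraph (Fin s) (Fin t)).induce
        ({w}ᶜ : Set (Fin s ⊕ Fin t))) : ℝ)) =o[atTop]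
      (fun n => (exNum n (completeBipartiteGraph (Fin s) (Fin t)) : ℝ)) := by
  subst hw
  have hsR : (2 : ℝ) ≤ s := by exact_mod_cast hs
  have htR : (s : ℝ) ^ 2 - 3 * s + 3 < t := by exact_mod_cast ht
  have : Nonempty (Fin t) := ⟨⟨0, by nlinarith⟩⟩
  set a : Fin s := ⟨0, by omega⟩
  have : Nonempty {x // x ≠ a} := ⟨⟨⟨1, by omega⟩, by simp [a]⟩⟩
  let e := induceComplInlIso (β := Fin t) a
  refine ⟨e.connected_iff.mpr completeBipartiteGraph_connected, ?_⟩
  simp only [exNum_eq_extremalNumber, extremalNumber_congr_right e]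
  have hupper (n : ℕ) : ‖(extremalNumber n (completeBipartiteGraph {x // x ≠ a} (Fin t)) : ℝ)‖ ≤
      (s - 1 + t) * n ^ (2 - 1 / (s - 1 : ℝ)) := by
    simpa [Nat.cast_sub (by omega : 1 ≤ s)] using
      extremalNumber_completeBipartiteGraph_le (α := {x // x ≠ a}) (β := Fin t) n
  have hlower (n : ℕ) (hn : 2 ≤ n) : (n : ℝ) ^ (2 - (s + t - 2) / (s * t - 1 : ℝ)) ≤
      100 * extremalNumber n (completeBipartiteGraph (Fin s) (Fin t)) := by
    have hst : 2 ≤ card (Fin s) * card (Fin t) := by simp only [Fintype.card_fin]; nlinarith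
    simpa using rpow_le_mul_extremalNumber_completeBipartiteGraph hst hn
  refine isLittleO_of_norm_le_rpow_of_rpow_le ?_ (by norm_num) (.of_forall hupper)
    (eventually_atTop.mpr ⟨2, hlower⟩)
  linarith [add_sub_two_div_mul_sub_one_lt hsR htR]
end

section
/- For every bipartite graph H and every k ≥ 2, f_k(n,H) ≥ (k−1)·ex(n,H) − C(k−1,2)·ex(n,H)²/C(n,2), where f_k(n,H) is the maximum number of edges in no monochromatic copy of H over all k-edge-colorings of K_n. -/
open Function Filter Asymptotics

section Helpers
open Function Finset

lemma trans_nondiag {n : ℕ} (p q : Sym2 (Fin n)) (hp : ¬p.IsDiag) (hq : ¬q.IsDiag) :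
    ∃ π : Equiv.Perm (Fin n), Sym2.map π p = q := by
  induction p using Sym2.ind with
  | _ a b =>
  induction q using Sym2.ind with
  | _ c d =>
  rw [Sym2.mk_isDiag_iff] at hp hq
  refine ⟨(Equiv.swap a c).trans (Equiv.swap (Equiv.swap a c b) d), ?_⟩
  have h1 : (Equiv.swap a c) a = c := Equiv.swap_apply_left a c
  have hbc : (Equiv.swap a c) b ≠ c := fun h => hp (((Equiv.swap a c).injective (h.trans h1.symm)).symm)
  simp only [Sym2.map_pair_eq, Equiv.trans_apply, h1]
  rw [Equiv.swap_apply_of_ne_of_ne hbc.symm hq, Equiv.swap_apply_left]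

lemma mem_image_perm {n : ℕ} (E : Finset (Sym2 (Fin n))) (σ : Equiv.Perm (Fin n))
    (p : Sym2 (Fin n)) : p ∈ E.image (Sym2.map σ) ↔ Sym2.map σ.symm p ∈ E := by
  constructor
  · rintro h
    rw [Finset.mem_image] at h
    obtain ⟨g, hg, rfl⟩ := h
    simpa [Sym2.map_map, Function.comp] using hg
  · intro h
    rw [Finset.mem_image]
    exact ⟨Sym2.map σ.symm p, h, by simp [Sym2.map_map, Function.comp]⟩

lemma countE {n : ℕ} (E : Finset (Sym2 (Fin n))) (hE : ∀ p ∈ E, ¬p.IsDiag)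
    (σ : Equiv.Perm (Fin n)) :
    ((univ.filter fun p : Sym2 (Fin n) => ¬p.IsDiag ∧ Sym2.map σ p ∈ E)).card = E.card := by
  apply Finset.card_bij (fun p _ => Sym2.map σ p)
  · intro p hp; rw [mem_filter] at hp; exact hp.2.2
  · intro p hp q hq h
    exact Sym2.map.injective σ.injective h
  · intro g hg
    refine ⟨Sym2.map σ.symm g, ?_, by simp [Sym2.map_map, Function.comp]⟩
    rw [mem_filter]
    refine ⟨mem_univ _, ?_, by simpa [Sym2.map_map, Function.comp] using hg⟩
    rw [Sym2.isDiag_map σ.symm.injective]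
    exact hE g hg

lemma count_const {n : ℕ} (E : Finset (Sym2 (Fin n))) (p q : Sym2 (Fin n))
    (hp : ¬p.IsDiag) (hq : ¬q.IsDiag) :
    (univ.filter fun σ : Equiv.Perm (Fin n) => Sym2.map σ p ∈ E).card =
    (univ.filter fun σ : Equiv.Perm (Fin n) => Sym2.map σ q ∈ E).card := by
  obtain ⟨π, hπ⟩ := trans_nondiag q p hq hp
  apply Finset.card_bij' (fun σ _ => σ * π) (fun τ _ => τ * π⁻¹)
  · intro σ hσ
    rw [mem_filter] at hσ ⊢
    refine ⟨mem_univ _, ?_⟩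
    rw [Equiv.Perm.coe_mul, ← Sym2.map_map, hπ]
    exact hσ.2
  · intro τ hτ
    rw [mem_filter] at hτ ⊢
    refine ⟨mem_univ _, ?_⟩
    have : Sym2.map ⇑(τ * π⁻¹) p = Sym2.map τ q := by
      rw [← hπ, Sym2.map_map]
      simp [Function.comp_def]
    rw [this]
    exact hτ.2
  · intro σ _; group
  · intro τ _; group

lemma countFix {n : ℕ} (E : Finset (Sym2 (Fin n))) (hE : ∀ p ∈ E, ¬p.IsDiag)
    (p : Sym2 (Fin n)) (hp : ¬p.IsDiag) :
    (univ.filter fun σ : Equiv.Perm (Fin n) => Sym2.map σ p ∈ E).card * n.choose 2 =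
      n.factorial * E.card := by
  have hnd : (univ.filter fun q : Sym2 (Fin n) => ¬q.IsDiag).card = n.choose 2 := by
    rw [← Fintype.card_subtype, Sym2.card_subtype_not_diag, Fintype.card_fin]
  calc (univ.filter fun σ : Equiv.Perm (Fin n) => Sym2.map σ p ∈ E).card * n.choose 2
      = ∑ q ∈ univ.filter fun q : Sym2 (Fin n) => ¬q.IsDiag,
          (univ.filter fun σ : Equiv.Perm (Fin n) => Sym2.map σ q ∈ E).card := by
        rw [Finset.sum_congr rfl (fun q hq => count_const E q p (by simpa using (mem_filter.mp hq).2) hp)]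
        rw [Finset.sum_const, hnd, smul_eq_mul, mul_comm]
    _ = ∑ q ∈ univ.filter fun q : Sym2 (Fin n) => ¬q.IsDiag,
          ∑ σ : Equiv.Perm (Fin n), if Sym2.map σ q ∈ E then 1 else 0 := by
        exact Finset.sum_congr rfl fun q _ => Finset.card_filter _ _
    _ = ∑ σ : Equiv.Perm (Fin n),
          ∑ q ∈ univ.filter fun q : Sym2 (Fin n) => ¬q.IsDiag,
            if Sym2.map σ q ∈ E then 1 else 0 := Finset.sum_comm
    _ = ∑ σ : Equiv.Perm (Fin n), (E.card : ℕ) := by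
        refine Finset.sum_congr rfl fun σ _ => ?_
        rw [← Finset.card_filter, Finset.filter_filter]
        exact countE E hE σ
    _ = n.factorial * E.card := by
        rw [Finset.sum_const, Finset.card_univ, Fintype.card_perm, Fintype.card_fin, smul_eq_mul]

lemma sum_inter {n : ℕ} (E F : Finset (Sym2 (Fin n))) (hE : ∀ p ∈ E, ¬p.IsDiag)
    (hF : ∀ p ∈ F, ¬p.IsDiag) :
    (∑ σ : Equiv.Perm (Fin n), (F ∩ E.image (Sym2.map σ)).card) * n.choose 2 =
      F.card * (n.factorial * E.card) := by
  have h1 : ∀ σ : Equiv.Perm (Fin n), (F ∩ E.image (Sym2.map σ)).card =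
      ∑ p ∈ F, if Sym2.map σ.symm p ∈ E then 1 else 0 := by
    intro σ
    rw [← Finset.filter_mem_eq_inter, Finset.card_filter]
    exact Finset.sum_congr rfl fun p _ => by simp only [mem_image_perm, Equiv.Perm.inv_def]
  calc (∑ σ : Equiv.Perm (Fin n), (F ∩ E.image (Sym2.map σ)).card) * n.choose 2
      = (∑ p ∈ F, ∑ σ : Equiv.Perm (Fin n), if Sym2.map σ p ∈ E then 1 else 0) * n.choose 2 := by
        rw [Finset.sum_congr rfl fun σ _ => h1 σ, Finset.sum_comm]
        congr 1
        refine Finset.sum_congr rfl fun p _ => ?_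
        exact Fintype.sum_equiv (Equiv.inv (Equiv.Perm (Fin n))) _ _ fun σ => rfl
    _ = ∑ p ∈ F, (univ.filter fun σ : Equiv.Perm (Fin n) => Sym2.map σ p ∈ E).card * n.choose 2 := by
        rw [Finset.sum_mul]
        exact Finset.sum_congr rfl fun p _ => by rw [Finset.card_filter]
    _ = F.card * (n.factorial * E.card) := by
        rw [Finset.sum_congr rfl fun p hp => countFix E hE p (hF p hp), Finset.sum_const, smul_eq_mul]

lemma exists_perms {n : ℕ} (hn : 2 ≤ n) (E : Finset (Sym2 (Fin n)))
    (hE : ∀ p ∈ E, ¬p.IsDiag) (m : ℕ) :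
    ∃ σ : ℕ → Equiv.Perm (Fin n),
      ((m : ℝ) * E.card - (m.choose 2 : ℝ) * (E.card : ℝ) ^ 2 / (n.choose 2 : ℝ)) ≤
        (((Finset.range m).biUnion fun i => E.image (Sym2.map (σ i))).card : ℝ) := by
  have hN : (0 : ℝ) < (n.choose 2 : ℝ) := by
    exact_mod_cast Nat.choose_pos hn
  have hImND : ∀ (τ : Equiv.Perm (Fin n)) (p : Sym2 (Fin n)),
      p ∈ E.image (Sym2.map τ) → ¬p.IsDiag := by
    intro τ p hp
    rw [Finset.mem_image] at hp
    obtain ⟨g, hg, rfl⟩ := hp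
    rw [Sym2.isDiag_map τ.injective]
    exact hE g hg
  have hImCard : ∀ τ : Equiv.Perm (Fin n), (E.image (Sym2.map τ)).card = E.card :=
    fun τ => Finset.card_image_of_injective E (Sym2.map.injective τ.injective)
  induction m with
  | zero => exact ⟨fun _ => 1, by simp⟩
  | succ m ih =>
    obtain ⟨σ, hσ⟩ := ih
    -- average the pairwise intersections over the new permutation
    have havg : ∃ τ : Equiv.Perm (Fin n),
        (∑ j ∈ Finset.range m,
          ((E.image (Sym2.map (σ j)) ∩ E.image (Sym2.map τ)).card : ℝ)) ≤
          (m : ℝ) * (E.card : ℝ) ^ 2 / (n.choose 2 : ℝ) := by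
      have hfix : ∀ j, (∑ τ : Equiv.Perm (Fin n),
          ((E.image (Sym2.map (σ j)) ∩ E.image (Sym2.map τ)).card : ℝ)) =
            (E.card : ℝ) * ((n.factorial : ℝ) * E.card) / (n.choose 2 : ℝ) := by
        intro j
        have := sum_inter E (E.image (Sym2.map (σ j))) hE (hImND (σ j))
        rw [hImCard (σ j)] at this
        have := congrArg (fun x : ℕ => (x : ℝ)) this
        push_cast at this
        field_simp
        linarith [this]
      have hsum : (∑ τ : Equiv.Perm (Fin n), ∑ j ∈ Finset.range m,
          ((E.image (Sym2.map (σ j)) ∩ E.image (Sym2.map τ)).card : ℝ)) ≤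
          ∑ _τ : Equiv.Perm (Fin n), (m : ℝ) * (E.card : ℝ) ^ 2 / (n.choose 2 : ℝ) := by
        rw [Finset.sum_comm]
        rw [Finset.sum_congr rfl fun j _ => hfix j]
        rw [Finset.sum_const, Finset.sum_const, Finset.card_univ, Fintype.card_perm,
          Fintype.card_fin, Finset.card_range, nsmul_eq_mul, nsmul_eq_mul]
        rw [mul_div_assoc, mul_div_assoc]
        apply le_of_eq
        ring
      obtain ⟨τ, _, hτ⟩ := Finset.exists_le_of_sum_le (Finset.univ_nonempty
          (α := Equiv.Perm (Fin n))) hsum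
      exact ⟨τ, hτ⟩
    obtain ⟨τ, hτ⟩ := havg
    refine ⟨Function.update σ m τ, ?_⟩
    have hAj : ∀ j ∈ Finset.range m, E.image (Sym2.map ((Function.update σ m τ) j)) =
        E.image (Sym2.map (σ j)) := by
      intro j hj
      rw [Finset.mem_range] at hj
      rw [Function.update_of_ne (Nat.ne_of_lt hj)]
    have hU : ((Finset.range (m+1)).biUnion fun i =>
          E.image (Sym2.map ((Function.update σ m τ) i))) =
        (E.image (Sym2.map τ)) ∪
          ((Finset.range m).biUnion fun i => E.image (Sym2.map (σ i))) := by
      rw [Finset.range_add_one, Finset.biUnion_insert, Function.update_self]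
      congr 1
      exact Finset.biUnion_congr rfl hAj
    rw [hU]
    have hint : (((E.image (Sym2.map τ)) ∩
          ((Finset.range m).biUnion fun i => E.image (Sym2.map (σ i)))).card : ℝ) ≤
        (m : ℝ) * (E.card : ℝ) ^ 2 / (n.choose 2 : ℝ) := by
      refine le_trans ?_ hτ
      rw [Finset.inter_biUnion]
      have h1 : (((Finset.range m).biUnion fun i =>
            (E.image (Sym2.map τ)) ∩ E.image (Sym2.map (σ i))).card : ℕ) ≤
          ∑ j ∈ Finset.range m, ((E.image (Sym2.map (σ j)) ∩ E.image (Sym2.map τ)).card) := by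
        refine le_trans Finset.card_biUnion_le ?_
        exact Finset.sum_le_sum fun j _ => le_of_eq (congrArg Finset.card (Finset.inter_comm _ _))
      calc ((((Finset.range m).biUnion fun i =>
            (E.image (Sym2.map τ)) ∩ E.image (Sym2.map (σ i))).card : ℕ) : ℝ)
          ≤ ((∑ j ∈ Finset.range m,
              ((E.image (Sym2.map (σ j)) ∩ E.image (Sym2.map τ)).card) : ℕ) : ℝ) := by
            exact_mod_cast h1
        _ = ∑ j ∈ Finset.range m,
              ((E.image (Sym2.map (σ j)) ∩ E.image (Sym2.map τ)).card : ℝ) := by push_cast; rfl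
    rw [Finset.cast_card_union]
    have hcard : ((E.image (Sym2.map τ)).card : ℝ) = (E.card : ℝ) := by
      exact_mod_cast hImCard τ
    have hch : (((m+1).choose 2 : ℕ) : ℝ) = ((m.choose 2 : ℕ) : ℝ) + (m : ℝ) := by
      rw [Nat.choose_succ_succ]
      push_cast [Nat.choose_one_right]
      ring
    push_cast only []
    rw [hcard]
    push_cast [hch]
    have hsplit : ((m.choose 2 : ℕ) : ℝ) * (E.card : ℝ) ^ 2 / (n.choose 2 : ℝ) +
        (m : ℝ) * (E.card : ℝ) ^ 2 / (n.choose 2 : ℝ) =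
        (((m.choose 2 : ℕ) : ℝ) + (m : ℝ)) * (E.card : ℝ) ^ 2 / (n.choose 2 : ℝ) := by
      ring
    linarith [hσ, hint, hsplit]

noncomputable def myColor {n : ℕ} (k : ℕ) (hk : 2 ≤ k) (E : Finset (Sym2 (Fin n)))
    (σ : ℕ → Equiv.Perm (Fin n)) (p : Sym2 (Fin n)) : Fin k :=
  if h : ((Finset.range (k-1)).filter fun i => p ∈ E.image (Sym2.map (σ i))).Nonempty
  then ⟨((Finset.range (k-1)).filter fun i => p ∈ E.image (Sym2.map (σ i))).min' h, by
    have := Finset.min'_mem _ h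
    rw [Finset.mem_filter, Finset.mem_range] at this
    omega⟩
  else ⟨k-1, by omega⟩

lemma myColor_lt {n k : ℕ} {hk : 2 ≤ k} {E : Finset (Sym2 (Fin n))}
    {σ : ℕ → Equiv.Perm (Fin n)} (p : Sym2 (Fin n)) (i : ℕ) (hi : i < k-1)
    (hp : p ∈ E.image (Sym2.map (σ i))) : (myColor k hk E σ p).val < k - 1 := by
  have h : ((Finset.range (k-1)).filter fun i => p ∈ E.image (Sym2.map (σ i))).Nonempty :=
    ⟨i, Finset.mem_filter.mpr ⟨Finset.mem_range.mpr hi, hp⟩⟩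
  rw [myColor, dif_pos h]
  have := Finset.min'_mem _ h
  rw [Finset.mem_filter, Finset.mem_range] at this
  exact this.1

lemma myColor_mem {n k : ℕ} {hk : 2 ≤ k} {E : Finset (Sym2 (Fin n))}
    {σ : ℕ → Equiv.Perm (Fin n)} (p : Sym2 (Fin n))
    (h : (myColor k hk E σ p).val < k - 1) :
    p ∈ E.image (Sym2.map (σ (myColor k hk E σ p).val)) := by
  by_cases hne : ((Finset.range (k-1)).filter fun i => p ∈ E.image (Sym2.map (σ i))).Nonempty
  · rw [myColor, dif_pos hne] at h ⊢
    have := Finset.min'_mem _ hne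
    rw [Finset.mem_filter] at this
    exact this.2
  · rw [myColor, dif_neg hne] at h
    exact absurd h (lt_irrefl _)

lemma mem_NIM {α : Type*} {n k : ℕ} (H : SimpleGraph α) (G : SimpleGraph (Fin n))
    (hG : ¬ Copies H G) (hk : 2 ≤ k) (E : Finset (Sym2 (Fin n)))
    (hEG : ∀ p ∈ E, p ∈ G.edgeSet) (σ : ℕ → Equiv.Perm (Fin n)) :
    ∀ p ∈ (Finset.range (k-1)).biUnion fun i => E.image (Sym2.map (σ i)),
      ¬ p.IsDiag ∧ ∀ (i : Fin k) (f : α → Fin n), Function.Injective f →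
        (∀ ⦃u v⦄, H.Adj u v → myColor k hk E σ s(f u, f v) = i) →
        ∀ ⦃u v⦄, H.Adj u v → p ≠ s(f u, f v) := by
  intro p hp
  rw [Finset.mem_biUnion] at hp
  obtain ⟨i1, hi1, hpi⟩ := hp
  rw [Finset.mem_range] at hi1
  have hnd : ¬ p.IsDiag := by
    rw [Finset.mem_image] at hpi
    obtain ⟨g, hg, rfl⟩ := hpi
    rw [Sym2.isDiag_map (σ i1).injective]
    exact G.not_isDiag_of_mem_edgeSet (hEG g hg)
  rw [Finset.mem_image] at hpi
  refine ⟨hnd, ?_⟩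
  intro i f hf hmono u v huv heq
  have hlt : (myColor k hk E σ p).val < k - 1 := myColor_lt p i1 hi1 (Finset.mem_image.mpr hpi)
  have hci : myColor k hk E σ p = i := by rw [heq]; exact hmono huv
  apply hG
  set i0 := (myColor k hk E σ p).val with hi0
  refine ⟨fun x => (σ i0).symm (f x), (σ i0).symm.injective.comp hf, ?_⟩
  intro u' v' huv'
  have h1 : myColor k hk E σ s(f u', f v') = i := hmono huv'
  have hval : (myColor k hk E σ s(f u', f v')).val = i0 := by rw [h1, hi0, hci]
  have h2 : (myColor k hk E σ s(f u', f v')).val < k - 1 := by rw [hval]; exact hlt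
  have h3 := myColor_mem (hk := hk) s(f u', f v') h2
  rw [hval, mem_image_perm, Sym2.map_pair_eq] at h3
  exact (SimpleGraph.mem_edgeSet G).mp (hEG _ h3)

end Helpers

/-- Lower bound (2) of the paper: for every bipartite graph `H` and `k ≥ 2`,
`f_k(n,H) ≥ (k−1)·ex(n,H) − C(k−1,2)·ex(n,H)²/C(n,2)`. -/
theorem stmt_10 {α : Type*} [Fintype α] (H : SimpleGraph α) (hbip : H.Colorable 2)
    (k n : ℕ) (hk : 2 ≤ k) (hn : 2 ≤ n) :
    ((k : ℝ) - 1) * exNum n H -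
        (((k - 1).choose 2 : ℝ) * (exNum n H : ℝ) ^ 2 / (n.choose 2 : ℝ))
      ≤ (fNum n k H : ℝ) := by
  classical
  by_cases h0 : exNum n H = 0
  · rw [h0]
    simp
  · have hex : exNum n H ∈
        {m | ∃ G : SimpleGraph (Fin n), ¬ Copies H G ∧ m = Nat.card G.edgeSet} := by
      apply Nat.sSup_mem
      · by_contra hne
        rw [Set.not_nonempty_iff_eq_empty] at hne
        apply h0
        rw [exNum, hne]
        exact csSup_empty
      · refine ⟨Nat.card (Sym2 (Fin n)), ?_⟩
        rintro m ⟨G, -, rfl⟩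
        rw [Nat.card_coe_set_eq]
        refine le_trans (Set.ncard_le_ncard (Set.subset_univ _) Set.finite_univ) ?_
        rw [Set.ncard_univ]
    obtain ⟨G, hG, hGe⟩ := hex
    set E := (Set.toFinite G.edgeSet).toFinset with hEdef
    have hEcard : E.card = exNum n H := by
      rw [hGe, Nat.card_coe_set_eq, Set.ncard_eq_toFinset_card]
    have hEG : ∀ p ∈ E, p ∈ G.edgeSet := fun p hp => (Set.Finite.mem_toFinset _).mp hp
    have hEnd : ∀ p ∈ E, ¬ p.IsDiag := fun p hp =>
      G.not_isDiag_of_mem_edgeSet (hEG p hp)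
    obtain ⟨σ, hσ⟩ := exists_perms hn E hEnd (k-1)
    rw [hEcard] at hσ
    set c := myColor k hk E σ with hc
    set U := (Finset.range (k-1)).biUnion fun i => E.image (Sym2.map (σ i)) with hU
    have hsub : (↑U : Set (Sym2 (Fin n))) ⊆ NIMedges H c :=
      fun p hp => mem_NIM H G hG hk E hEG σ p (Finset.mem_coe.mp hp)
    have h2 : U.card ≤ Nat.card (NIMedges H c) := by
      rw [Nat.card_coe_set_eq, ← Set.ncard_coe_finset U]
      exact Set.ncard_le_ncard hsub (Set.toFinite _)
    have h1 : Nat.card (NIMedges H c) ≤ fNum n k H := by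
      apply le_csSup
      · refine ⟨Nat.card (Sym2 (Fin n)), ?_⟩
        rintro m ⟨c', rfl⟩
        rw [Nat.card_coe_set_eq]
        refine le_trans (Set.ncard_le_ncard (Set.subset_univ _) Set.finite_univ) ?_
        rw [Set.ncard_univ]
      · exact ⟨c, rfl⟩
    have hk1 : ((k : ℝ) - 1) = ((k - 1 : ℕ) : ℝ) := by
      rw [Nat.cast_sub (by omega : 1 ≤ k), Nat.cast_one]
    rw [hk1]
    calc ((k - 1 : ℕ) : ℝ) * exNum n H -
          (((k - 1).choose 2 : ℝ) * (exNum n H : ℝ) ^ 2 / (n.choose 2 : ℝ))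
        ≤ (U.card : ℝ) := hσ
      _ ≤ (Nat.card (NIMedges H c) : ℝ) := by exact_mod_cast h2
      _ ≤ (fNum n k H : ℝ) := by exact_mod_cast h1
end
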